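/- Let Q be a restriction quantal frame. The set C(Q) of completely prime filters of Q, with the partial product A·B = (AB)↑ defined when d(A) = r(B), is a category whose identities are exactly the completely prime filters containing a projection, with d(A) = (A*)↑ and r(A) = (A⁺)↑. -/
import Mathlib


/-- A restriction quantal frame: a frame `Q` with a monoid multiplication
distributing over arbitrary joins (a unital quantal frame), which is an
Ehresmann semigroup whose projections are exactly the elements below the
monoid unit `1` and whose unary operations `st` (`*`) and `pl` (`⁺`) preserve
joins, such that the top element is a join of partial isometries and the
partial isometries are closed under multiplication. -/
class RQF (Q : Type*) extends Order.Frame Q, Monoid Q where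
  mul_sSup_distrib : ∀ (a : Q) (S : Set Q), a * sSup S = ⨆ b ∈ S, a * b
  sSup_mul_distrib : ∀ (a : Q) (S : Set Q), sSup S * a = ⨆ b ∈ S, b * a
  st : Q → Q
  pl : Q → Q
  st_le_one : ∀ a : Q, st a ≤ 1
  pl_le_one : ∀ a : Q, pl a ≤ 1
  proj_comm : ∀ a b : Q, a ≤ 1 → b ≤ 1 → a * b = b * a
  proj_idem : ∀ a : Q, a ≤ 1 → a * a = a
  st_proj : ∀ a : Q, a ≤ 1 → st a = a
  pl_proj : ∀ a : Q, a ≤ 1 → pl a = a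
  mul_st : ∀ a : Q, a * st a = a
  pl_mul : ∀ a : Q, pl a * a = a
  st_mul_eq : ∀ a b : Q, st (a * b) = st (st a * b)
  pl_mul_eq : ∀ a b : Q, pl (a * b) = pl (a * pl b)
  st_sSup : ∀ S : Set Q, st (sSup S) = ⨆ a ∈ S, st a
  pl_sSup : ∀ S : Set Q, pl (sSup S) = ⨆ a ∈ S, pl a
  top_join_pi : sSup {a : Q | ∀ b, b ≤ a → b = pl b * a ∧ b = a * st b} = ⊤
  pi_mul_closed : ∀ a b : Q,
    (∀ c, c ≤ a → c = pl c * a ∧ c = a * st c) →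
    (∀ c, c ≤ b → c = pl c * b ∧ c = b * st c) →
    (∀ c, c ≤ a * b → c = pl c * (a * b) ∧ c = (a * b) * st c)

namespace RQF

variable {Q : Type*} [RQF Q]

/-- `a` is a partial isometry. -/
def PI (a : Q) : Prop := ∀ b, b ≤ a → b = pl b * a ∧ b = a * st b

/-- `a` and `b` are compatible. -/
def Compat (a b : Q) : Prop := a * st b = b * st a ∧ pl b * a = pl a * b

/-- A completely prime filter in `Q`: a proper filter such that whenever a
join lies in it, one of the joinands does. -/
def CPFilter (A : Set Q) : Prop :=
  A.Nonempty ∧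
  (∀ a ∈ A, ∀ b : Q, a ≤ b → b ∈ A) ∧
  (∀ a ∈ A, ∀ b ∈ A, a ⊓ b ∈ A) ∧
  (⊥ : Q) ∉ A ∧
  ∀ S : Set Q, sSup S ∈ A → ∃ s ∈ S, s ∈ A

/-- A completely prime filter in the frame `e↓ = 1↓` of projections. -/
def CPFilterProj (F : Set Q) : Prop :=
  F.Nonempty ∧
  (∀ f ∈ F, f ≤ (1 : Q)) ∧
  (∀ f ∈ F, ∀ g : Q, g ≤ (1 : Q) → f ≤ g → g ∈ F) ∧
  (∀ f ∈ F, ∀ g ∈ F, f ⊓ g ∈ F) ∧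
  (⊥ : Q) ∉ F ∧
  ∀ S : Set Q, (∀ s ∈ S, s ≤ (1 : Q)) → sSup S ∈ F → ∃ s ∈ S, s ∈ F

/-- Upward closure in `Q`. -/
def up (F : Set Q) : Set Q := {x | ∃ f ∈ F, f ≤ x}

/-- `d(A) = (A*)↑`. -/
def dF (A : Set Q) : Set Q := {x | ∃ a ∈ A, st a ≤ x}

/-- `r(A) = (A⁺)↑`. -/
def rF (A : Set Q) : Set Q := {x | ∃ a ∈ A, pl a ≤ x}

/-- `A · B = (AB)↑`. -/
def prodF (A B : Set Q) : Set Q := {x | ∃ a ∈ A, ∃ b ∈ B, a * b ≤ x}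

end RQF

namespace RQF

variable {Q : Type*} [RQF Q]

lemma mul_sup' (a b c : Q) : a * (b ⊔ c) = a * b ⊔ a * c := by
  rw [← sSup_pair, mul_sSup_distrib, iSup_pair]

lemma sup_mul' (a b c : Q) : (b ⊔ c) * a = b * a ⊔ c * a := by
  rw [← sSup_pair, sSup_mul_distrib, iSup_pair]

lemma mul_mono' {a b c d : Q} (hac : a ≤ c) (hbd : b ≤ d) : a * b ≤ c * d := by
  have h1 : a * b ≤ c * b := by
    have h := sup_mul' b a c
    rw [sup_eq_right.mpr hac] at h
    rw [h]; exact le_sup_left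
  have h2 : c * b ≤ c * d := by
    have h := mul_sup' c b d
    rw [sup_eq_right.mpr hbd] at h
    rw [h]; exact le_sup_left
  exact h1.trans h2

lemma st_mono' {a b : Q} (h : a ≤ b) : st a ≤ st b := by
  have h2 : st (a ⊔ b) = st a ⊔ st b := by rw [← sSup_pair, st_sSup, iSup_pair]
  rw [sup_eq_right.mpr h] at h2
  rw [h2]; exact le_sup_left

lemma pl_mono' {a b : Q} (h : a ≤ b) : pl a ≤ pl b := by
  have h2 : pl (a ⊔ b) = pl a ⊔ pl b := by rw [← sSup_pair, pl_sSup, iSup_pair]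
  rw [sup_eq_right.mpr h] at h2
  rw [h2]; exact le_sup_left

lemma st_bot' : st (⊥ : Q) = ⊥ := by
  have := st_sSup (∅ : Set Q); simpa using this

lemma st_mul_le (a b : Q) : st (a * b) ≤ st b := by
  rw [st_mul_eq]
  refine st_mono' ?_
  calc st a * b ≤ 1 * b := mul_mono' (st_le_one a) le_rfl
    _ = b := one_mul b

lemma pl_mul_le (a b : Q) : pl (a * b) ≤ pl a := by
  rw [pl_mul_eq]
  refine pl_mono' ?_
  calc a * pl b ≤ a * 1 := mul_mono' le_rfl (pl_le_one b)
    _ = a := mul_one a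

lemma PI.mono {a b : Q} (h : PI a) (hb : b ≤ a) : PI b := by
  intro c hc
  obtain ⟨h1, h2⟩ := h c (hc.trans hb)
  constructor
  · refine le_antisymm ?_ ?_
    · calc c = pl c * c := (pl_mul c).symm
        _ ≤ pl c * b := mul_mono' le_rfl hc
    · calc pl c * b ≤ pl c * a := mul_mono' le_rfl hb
        _ = c := h1.symm
  · refine le_antisymm ?_ ?_
    · calc c = c * st c := (mul_st c).symm
        _ ≤ b * st c := mul_mono' hc le_rfl
    · calc b * st c ≤ a * st c := mul_mono' hb le_rfl
        _ = c := h2.symm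

lemma eq_sSup_PI (a : Q) : a = sSup {p : Q | PI p ∧ p ≤ a} := by
  refine le_antisymm ?_ (sSup_le fun p hp => hp.2)
  have h := top_join_pi (Q := Q)
  have h' : sSup {p : Q | PI p} = (⊤ : Q) := h
  calc a = a ⊓ sSup {p : Q | PI p} := by rw [h', inf_top_eq]
    _ = ⨆ p ∈ {p : Q | PI p}, a ⊓ p := inf_sSup_eq
    _ ≤ sSup {p : Q | PI p ∧ p ≤ a} := by
        refine iSup₂_le fun p hp => le_sSup ⟨hp.mono inf_le_right, inf_le_left⟩

lemma exists_PI_mem {A : Set Q} (hA : CPFilter A) {a : Q} (ha : a ∈ A) :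
    ∃ p ∈ A, PI p ∧ p ≤ a := by
  obtain ⟨-, -, -, -, hprime⟩ := hA
  have h : sSup {p : Q | PI p ∧ p ≤ a} ∈ A := by rw [← eq_sSup_PI]; exact ha
  obtain ⟨p, hp, hpA⟩ := hprime _ h
  exact ⟨p, hpA, hp⟩

/-- If `a' ∈ A` with `st a' ≤ e` then `a * e ∈ A` for `a ∈ A`. -/
lemma mul_right_mem {A : Set Q} (hA : CPFilter A) {a a' e : Q}
    (ha : a ∈ A) (ha' : a' ∈ A) (he : st a' ≤ e) : a * e ∈ A := by
  obtain ⟨-, hup, hmeet, -, -⟩ := hA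
  refine hup _ (hmeet a ha a' ha') _ ?_
  calc a ⊓ a' = (a ⊓ a') * st (a ⊓ a') := (mul_st _).symm
    _ ≤ a * e := mul_mono' inf_le_left ((st_mono' inf_le_right).trans he)

lemma mul_left_mem {A : Set Q} (hA : CPFilter A) {a a' e : Q}
    (ha : a ∈ A) (ha' : a' ∈ A) (he : pl a' ≤ e) : e * a ∈ A := by
  obtain ⟨-, hup, hmeet, -, -⟩ := hA
  refine hup _ (hmeet a ha a' ha') _ ?_
  calc a ⊓ a' = pl (a ⊓ a') * (a ⊓ a') := (pl_mul _).symm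
    _ ≤ e * a := mul_mono' ((pl_mono' inf_le_right).trans he) inf_le_left

lemma pi_mul_proj {p e : Q} (hp : PI p) (he : e ≤ 1) : p * e = pl (p * e) * p := by
  refine (hp _ ?_).1
  calc p * e ≤ p * 1 := mul_mono' le_rfl he
    _ = p := mul_one p

/-- properness of the product -/
lemma prod_mul_ne_bot {A B : Set Q} (hA : CPFilter A) (hB : CPFilter B)
    (hd : dF A = rF B) {a b : Q} (ha : a ∈ A) (hb : b ∈ B) : a * b ≠ ⊥ := by
  obtain ⟨-, -, hmeetB, hbotB, -⟩ := hB
  intro hab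
  have hsta : (st a : Q) ∈ rF B := by rw [← hd]; exact ⟨a, ha, le_rfl⟩
  obtain ⟨b₂, hb₂, hplb₂⟩ := hsta
  set b' := b ⊓ b₂ with hb'def
  have hb'B : b' ∈ B := hmeetB b hb b₂ hb₂
  have h1 : b' ≤ st a * b' := by
    calc b' = pl b' * b' := (pl_mul b').symm
      _ ≤ st a * b' := mul_mono' ((pl_mono' inf_le_right).trans hplb₂) le_rfl
  have h2 : st a * b' ≤ b' := by
    calc st a * b' ≤ 1 * b' := mul_mono' (st_le_one a) le_rfl
      _ = b' := one_mul b'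
  have heq : st a * b' = b' := le_antisymm h2 h1
  have hab' : a * b' = ⊥ := by
    refine le_antisymm ?_ bot_le
    calc a * b' ≤ a * b := mul_mono' le_rfl inf_le_left
      _ = ⊥ := hab
  have hstb' : st b' = ⊥ := by
    calc st b' = st (st a * b') := by rw [heq]
      _ = st (a * b') := (st_mul_eq a b').symm
      _ = ⊥ := by rw [hab', st_bot']
  have : b' = ⊥ := by
    calc b' = b' * st b' := (mul_st b').symm
      _ = b' * ⊥ := by rw [hstb']
      _ = ⊥ := by have := mul_sSup_distrib b' (∅ : Set Q); simpa using this
  exact hbotB (this ▸ hb'B)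

end RQF

namespace RQF

variable {Q : Type*} [RQF Q]

lemma prod_cpfilter {A B : Set Q} (hA : CPFilter A) (hB : CPFilter B)
    (hd : dF A = rF B) : CPFilter (prodF A B) := by
  obtain ⟨⟨a0, ha0⟩, hupA, hmeetA, hbotA, hprA⟩ := hA
  obtain ⟨⟨b0, hb0⟩, hupB, hmeetB, hbotB, hprB⟩ := hB
  have hA' : CPFilter A := ⟨⟨a0, ha0⟩, hupA, hmeetA, hbotA, hprA⟩
  have hB' : CPFilter B := ⟨⟨b0, hb0⟩, hupB, hmeetB, hbotB, hprB⟩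
  refine ⟨⟨a0 * b0, a0, ha0, b0, hb0, le_rfl⟩, ?_, ?_, ?_, ?_⟩
  · rintro x ⟨a, ha, b, hb, hab⟩ y hxy
    exact ⟨a, ha, b, hb, hab.trans hxy⟩
  · rintro x ⟨a1, ha1, b1, hb1, h1⟩ y ⟨a2, ha2, b2, hb2, h2⟩
    refine ⟨a1 ⊓ a2, hmeetA a1 ha1 a2 ha2, b1 ⊓ b2, hmeetB b1 hb1 b2 hb2, le_inf ?_ ?_⟩
    · exact (mul_mono' inf_le_left inf_le_left).trans h1
    · exact (mul_mono' inf_le_right inf_le_right).trans h2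
  · rintro ⟨a, ha, b, hb, hab⟩
    exact prod_mul_ne_bot hA' hB' hd ha hb (le_antisymm hab bot_le)
  · intro S hS
    obtain ⟨a, ha, b, hb, hab⟩ := hS
    obtain ⟨a', ha'A, ha'PI, ha'le⟩ := exists_PI_mem hA' ha
    obtain ⟨b', hb'B, hb'PI, hb'le⟩ := exists_PI_mem hB' hb
    set c := a' * b' with hcdef
    have hcPI : PI c := pi_mul_closed a' b' ha'PI hb'PI
    have hcle : c ≤ sSup S := (mul_mono' ha'le hb'le).trans hab
    have hc_eq : c = ⨆ s ∈ S, c ⊓ s := by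
      conv_lhs => rw [← inf_eq_left.mpr hcle]
      exact inf_sSup_eq
    have hplc : pl c = ⨆ s ∈ S, pl (c ⊓ s) := by
      conv_lhs => rw [hc_eq]
      rw [← sSup_image, pl_sSup, iSup_image]
    have hdist : pl c * a' = ⨆ s ∈ S, pl (c ⊓ s) * a' := by
      rw [hplc, ← sSup_image, sSup_mul_distrib, iSup_image]
    have hkey : pl c * a' = a' * pl b' := by
      have h1 : a' * pl b' = pl (a' * pl b') * a' := pi_mul_proj ha'PI (pl_le_one b')
      have h2 : pl (a' * pl b') = pl c := (pl_mul_eq a' b').symm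
      rw [h1, h2]
    have hplmem : (pl b' : Q) ∈ dF A := by rw [hd]; exact ⟨b', hb'B, le_rfl⟩
    obtain ⟨a₂, ha₂, hsta₂⟩ := hplmem
    have hmem : pl c * a' ∈ A := by
      rw [hkey]; exact mul_right_mem hA' ha'A ha₂ hsta₂
    have hsupmem : sSup ((fun s => pl (c ⊓ s) * a') '' S) ∈ A := by
      rw [sSup_image, ← hdist]; exact hmem
    obtain ⟨t, ht, htA⟩ := hprA _ hsupmem
    obtain ⟨s, hsS, rfl⟩ := ht
    refine ⟨s, hsS, pl (c ⊓ s) * a', htA, b', hb'B, ?_⟩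
    calc pl (c ⊓ s) * a' * b' = pl (c ⊓ s) * c := mul_assoc _ _ _
      _ = c ⊓ s := ((hcPI _ inf_le_left).1).symm
      _ ≤ s := inf_le_right

lemma dF_prod {A B : Set Q} (hA : CPFilter A) (hB : CPFilter B)
    (hd : dF A = rF B) : dF (prodF A B) = dF B := by
  obtain ⟨⟨a0, ha0⟩, hupA, hmeetA, hbotA, hprA⟩ := hA
  obtain ⟨-, hupB, hmeetB, -, -⟩ := hB
  ext x
  constructor
  · rintro ⟨cc, ⟨a, ha, b, hb, hab⟩, hst⟩
    have hsta : (st a : Q) ∈ rF B := by rw [← hd]; exact ⟨a, ha, le_rfl⟩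
    obtain ⟨b₂, hb₂, hplb₂⟩ := hsta
    refine ⟨b ⊓ b₂, hmeetB b hb b₂ hb₂, ?_⟩
    have h1 : b ⊓ b₂ ≤ st a * b := by
      calc b ⊓ b₂ = pl (b ⊓ b₂) * (b ⊓ b₂) := (pl_mul _).symm
        _ ≤ st a * b := mul_mono' ((pl_mono' inf_le_right).trans hplb₂) inf_le_left
    calc st (b ⊓ b₂) ≤ st (st a * b) := st_mono' h1
      _ = st (a * b) := (st_mul_eq a b).symm
      _ ≤ st cc := st_mono' hab
      _ ≤ x := hst
  · rintro ⟨b, hb, hst⟩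
    exact ⟨a0 * b, ⟨a0, ha0, b, hb, le_rfl⟩, (st_mul_le a0 b).trans hst⟩

lemma rF_prod {A B : Set Q} (hA : CPFilter A) (hB : CPFilter B)
    (hd : dF A = rF B) : rF (prodF A B) = rF A := by
  obtain ⟨-, hupA, hmeetA, -, -⟩ := hA
  obtain ⟨⟨b0, hb0⟩, hupB, hmeetB, hbotB, hprB⟩ := hB
  ext x
  constructor
  · rintro ⟨cc, ⟨a, ha, b, hb, hab⟩, hpl⟩
    have hplb : (pl b : Q) ∈ dF A := by rw [hd]; exact ⟨b, hb, le_rfl⟩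
    obtain ⟨a₂, ha₂, hsta₂⟩ := hplb
    refine ⟨a ⊓ a₂, hmeetA a ha a₂ ha₂, ?_⟩
    have h1 : a ⊓ a₂ ≤ a * pl b := by
      calc a ⊓ a₂ = (a ⊓ a₂) * st (a ⊓ a₂) := (mul_st _).symm
        _ ≤ a * pl b := mul_mono' inf_le_left ((st_mono' inf_le_right).trans hsta₂)
    calc pl (a ⊓ a₂) ≤ pl (a * pl b) := pl_mono' h1
      _ = pl (a * b) := (pl_mul_eq a b).symm
      _ ≤ pl cc := pl_mono' hab
      _ ≤ x := hpl
  · rintro ⟨a, ha, hpl⟩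
    exact ⟨a * b0, ⟨a, ha, b0, hb0, le_rfl⟩, (pl_mul_le a b0).trans hpl⟩

lemma prodF_assoc (A B C : Set Q) :
    prodF (prodF A B) C = prodF A (prodF B C) := by
  ext x
  constructor
  · rintro ⟨p, ⟨a, ha, b, hb, habp⟩, c, hc, hpc⟩
    refine ⟨a, ha, b * c, ⟨b, hb, c, hc, le_rfl⟩, ?_⟩
    calc a * (b * c) = a * b * c := (mul_assoc a b c).symm
      _ ≤ p * c := mul_mono' habp le_rfl
      _ ≤ x := hpc
  · rintro ⟨a, ha, p, ⟨b, hb, c, hc, hbcp⟩, hap⟩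
    refine ⟨a * b, ⟨a, ha, b, hb, le_rfl⟩, c, hc, ?_⟩
    calc a * b * c = a * (b * c) := mul_assoc a b c
      _ ≤ a * p := mul_mono' le_rfl hbcp
      _ ≤ x := hap

lemma dF_cpfilter {A : Set Q} (hA : CPFilter A) : CPFilter (dF A) := by
  obtain ⟨⟨a0, ha0⟩, hup, hmeet, hbot, hpr⟩ := hA
  refine ⟨⟨st a0, a0, ha0, le_rfl⟩, ?_, ?_, ?_, ?_⟩
  · rintro x ⟨a, ha, hst⟩ y hxy
    exact ⟨a, ha, hst.trans hxy⟩
  · rintro x ⟨a, ha, hsta⟩ y ⟨b, hb, hstb⟩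
    refine ⟨a ⊓ b, hmeet a ha b hb, le_inf ?_ ?_⟩
    · exact (st_mono' inf_le_left).trans hsta
    · exact (st_mono' inf_le_right).trans hstb
  · rintro ⟨a, ha, hst⟩
    have hsta : st a = ⊥ := le_antisymm hst bot_le
    have : a = ⊥ := by
      calc a = a * st a := (mul_st a).symm
        _ = a * ⊥ := by rw [hsta]
        _ = ⊥ := by have := mul_sSup_distrib a (∅ : Set Q); simpa using this
    exact hbot (this ▸ ha)
  · intro S hS
    obtain ⟨a, ha, hst⟩ := hS
    have hsa : st a = ⨆ s ∈ S, st a ⊓ s := by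
      conv_lhs => rw [← inf_eq_left.mpr hst]
      exact inf_sSup_eq
    have ha_eq : a = sSup ((fun s => a * (st a ⊓ s)) '' S) := by
      rw [sSup_image]
      calc a = a * st a := (mul_st a).symm
        _ = a * sSup ((fun s => st a ⊓ s) '' S) := by rw [sSup_image, ← hsa]
        _ = ⨆ t ∈ (fun s => st a ⊓ s) '' S, a * t := mul_sSup_distrib _ _
        _ = ⨆ s ∈ S, a * (st a ⊓ s) := iSup_image
    obtain ⟨t, ht, htA⟩ := hpr _ (ha_eq ▸ ha)
    obtain ⟨s, hsS, rfl⟩ := ht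
    refine ⟨s, hsS, a * (st a ⊓ s), htA, ?_⟩
    have hproj : (st a * (st a ⊓ s) : Q) ≤ 1 := by
      calc st a * (st a ⊓ s) ≤ 1 * 1 :=
        mul_mono' (st_le_one a) ((inf_le_left).trans (st_le_one a))
        _ = 1 := one_mul 1
    calc st (a * (st a ⊓ s)) = st (st a * (st a ⊓ s)) := st_mul_eq _ _
      _ = st a * (st a ⊓ s) := st_proj _ hproj
      _ ≤ 1 * (st a ⊓ s) := mul_mono' (st_le_one a) le_rfl
      _ = st a ⊓ s := one_mul _
      _ ≤ s := inf_le_right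

lemma rF_cpfilter {A : Set Q} (hA : CPFilter A) : CPFilter (rF A) := by
  obtain ⟨⟨a0, ha0⟩, hup, hmeet, hbot, hpr⟩ := hA
  refine ⟨⟨pl a0, a0, ha0, le_rfl⟩, ?_, ?_, ?_, ?_⟩
  · rintro x ⟨a, ha, hpl⟩ y hxy
    exact ⟨a, ha, hpl.trans hxy⟩
  · rintro x ⟨a, ha, hpla⟩ y ⟨b, hb, hplb⟩
    refine ⟨a ⊓ b, hmeet a ha b hb, le_inf ?_ ?_⟩
    · exact (pl_mono' inf_le_left).trans hpla
    · exact (pl_mono' inf_le_right).trans hplb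
  · rintro ⟨a, ha, hpl⟩
    have hpla : pl a = ⊥ := le_antisymm hpl bot_le
    have : a = ⊥ := by
      calc a = pl a * a := (pl_mul a).symm
        _ = ⊥ * a := by rw [hpla]
        _ = ⊥ := by have := sSup_mul_distrib a (∅ : Set Q); simpa using this
    exact hbot (this ▸ ha)
  · intro S hS
    obtain ⟨a, ha, hpl⟩ := hS
    have hpa : pl a = ⨆ s ∈ S, pl a ⊓ s := by
      conv_lhs => rw [← inf_eq_left.mpr hpl]
      exact inf_sSup_eq
    have ha_eq : a = sSup ((fun s => (pl a ⊓ s) * a) '' S) := by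
      rw [sSup_image]
      calc a = pl a * a := (pl_mul a).symm
        _ = sSup ((fun s => pl a ⊓ s) '' S) * a := by rw [sSup_image, ← hpa]
        _ = ⨆ t ∈ (fun s => pl a ⊓ s) '' S, t * a := sSup_mul_distrib _ _
        _ = ⨆ s ∈ S, (pl a ⊓ s) * a := iSup_image
    obtain ⟨t, ht, htA⟩ := hpr _ (ha_eq ▸ ha)
    obtain ⟨s, hsS, rfl⟩ := ht
    refine ⟨s, hsS, (pl a ⊓ s) * a, htA, ?_⟩
    have hproj : ((pl a ⊓ s) * pl a : Q) ≤ 1 := by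
      calc (pl a ⊓ s) * pl a ≤ 1 * 1 :=
        mul_mono' ((inf_le_left).trans (pl_le_one a)) (pl_le_one a)
        _ = 1 := one_mul 1
    calc pl ((pl a ⊓ s) * a) = pl ((pl a ⊓ s) * pl a) := pl_mul_eq _ _
      _ = (pl a ⊓ s) * pl a := pl_proj _ hproj
      _ ≤ (pl a ⊓ s) * 1 := mul_mono' le_rfl (pl_le_one a)
      _ = pl a ⊓ s := mul_one _
      _ ≤ s := inf_le_right

lemma prod_dF_self {A E : Set Q} (hA : CPFilter A) (hE : E = dF A) :
    prodF A E = A := by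
  have hA' : CPFilter A := hA
  obtain ⟨-, hup, hmeet, -, -⟩ := id hA
  ext x
  constructor
  · rintro ⟨a, ha, y, hy, haxy⟩
    rw [hE] at hy
    obtain ⟨a', ha', hst⟩ := hy
    exact hup _ (mul_right_mem hA' ha ha' hst) _ haxy
  · intro hx
    exact ⟨x, hx, st x, hE ▸ ⟨x, hx, le_rfl⟩, (mul_st x).le⟩

lemma rF_prod_self {A E : Set Q} (hA : CPFilter A) (hE : E = rF A) :
    prodF E A = A := by
  have hA' : CPFilter A := hA
  obtain ⟨-, hup, hmeet, -, -⟩ := id hA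
  ext x
  constructor
  · rintro ⟨y, hy, a, ha, hyax⟩
    rw [hE] at hy
    obtain ⟨a', ha', hpl⟩ := hy
    exact hup _ (mul_left_mem hA' ha ha' hpl) _ hyax
  · intro hx
    exact ⟨pl x, hE ▸ ⟨x, hx, le_rfl⟩, x, hx, (pl_mul x).le⟩

lemma dF_of_proj {E : Set Q} (hE : CPFilter E) (hf : ∃ f ∈ E, f ≤ (1 : Q)) :
    dF E = E := by
  obtain ⟨-, hup, hmeet, -, -⟩ := hE
  obtain ⟨f, hf, hf1⟩ := hf
  ext x
  constructor
  · rintro ⟨a, ha, hst⟩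
    have h : a ⊓ f ≤ st a := by
      calc a ⊓ f = st (a ⊓ f) := (st_proj _ (inf_le_right.trans hf1)).symm
        _ ≤ st a := st_mono' inf_le_left
    exact hup _ (hmeet a ha f hf) _ (h.trans hst)
  · intro hx
    refine ⟨x ⊓ f, hmeet x hx f hf, ?_⟩
    calc st (x ⊓ f) = x ⊓ f := st_proj _ (inf_le_right.trans hf1)
      _ ≤ x := inf_le_left

lemma rF_of_proj {E : Set Q} (hE : CPFilter E) (hf : ∃ f ∈ E, f ≤ (1 : Q)) :
    rF E = E := by
  obtain ⟨-, hup, hmeet, -, -⟩ := hE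
  obtain ⟨f, hf, hf1⟩ := hf
  ext x
  constructor
  · rintro ⟨a, ha, hpl⟩
    have h : a ⊓ f ≤ pl a := by
      calc a ⊓ f = pl (a ⊓ f) := (pl_proj _ (inf_le_right.trans hf1)).symm
        _ ≤ pl a := pl_mono' inf_le_left
    exact hup _ (hmeet a ha f hf) _ (h.trans hpl)
  · intro hx
    refine ⟨x ⊓ f, hmeet x hx f hf, ?_⟩
    calc pl (x ⊓ f) = x ⊓ f := pl_proj _ (inf_le_right.trans hf1)
      _ ≤ x := inf_le_left

end RQF

open RQF in
/-- the completely prime filters of a restriction quantal frame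
form a category under `A · B = (AB)↑` (defined when `d(A) = r(B)`), whose
identities are exactly the completely prime filters containing a projection. -/
theorem cpfilters_form_category {Q : Type*} [RQF Q] :
    -- the product is a completely prime filter and `d`, `r` behave correctly
    (∀ A B : Set Q, CPFilter A → CPFilter B → dF A = rF B →
      CPFilter (prodF A B) ∧ dF (prodF A B) = dF B ∧ rF (prodF A B) = rF A) ∧
    -- associativity
    (∀ A B C : Set Q, CPFilter A → CPFilter B → CPFilter C →
      dF A = rF B → dF B = rF C →
      prodF (prodF A B) C = prodF A (prodF B C)) ∧
    -- `d(A)` and `r(A)` are identity completely prime filters and act as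
    -- right and left units
    (∀ A : Set Q, CPFilter A →
      CPFilter (dF A) ∧ (∃ f ∈ dF A, f ≤ (1 : Q)) ∧
      CPFilter (rF A) ∧ (∃ f ∈ rF A, f ≤ (1 : Q)) ∧
      prodF A (dF A) = A ∧ prodF (rF A) A = A) ∧
    -- completely prime filters containing a projection are fixed by `d`, `r`
    (∀ E : Set Q, CPFilter E → (∃ f ∈ E, f ≤ (1 : Q)) →
      dF E = E ∧ rF E = E) ∧
    -- and they are exactly the identities of the category
    (∀ A E : Set Q, CPFilter A → CPFilter E → (∃ f ∈ E, f ≤ (1 : Q)) →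
      (dF A = rF E → prodF A E = A) ∧ (dF E = rF A → prodF E A = A)) := by
  refine ⟨?_, ?_, ?_, ?_, ?_⟩
  · intro A B hA hB hd
    exact ⟨prod_cpfilter hA hB hd, dF_prod hA hB hd, rF_prod hA hB hd⟩
  · intro A B C _ _ _ _ _
    exact prodF_assoc A B C
  · intro A hA
    obtain ⟨⟨a0, ha0⟩, -, -, -, -⟩ := id hA
    exact ⟨dF_cpfilter hA, ⟨st a0, ⟨a0, ha0, le_rfl⟩, st_le_one a0⟩,
      rF_cpfilter hA, ⟨pl a0, ⟨a0, ha0, le_rfl⟩, pl_le_one a0⟩,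
      prod_dF_self hA rfl, rF_prod_self hA rfl⟩
  · intro E hE hf
    exact ⟨dF_of_proj hE hf, rF_of_proj hE hf⟩
  · intro A E hA hE hf
    constructor
    · intro hd
      exact prod_dF_self hA ((hd.trans (rF_of_proj hE hf)).symm)
    · intro hd
      exact rF_prod_self hA (((dF_of_proj hE hf).symm).trans hd)
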